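/- Let ℰ and ℱ be regular bundle event structures with disjoint sets of events. If x is a configuration of ℰ·ℱ with x ∩ F ≠ ∅, then x ∩ E is maximal in C(ℰ) with respect to set inclusion. -/

import Mathlib

/-!
Call a BES *final-maximal* if every configuration containing a final event is maximal. Regular BES
are well formed and final-maximal, by induction on their construction: a configuration of `ℰ + ℱ`
lies entirely in one summand; the restrictions of a configuration of `ℰ · ℱ` or `ℰ ‖ ℱ` to the
components are configurations of the components, and a final event of the composite can only occur
after final events of the components; copies are isomorphic, and a configuration of a chain union
is finite, so it already lives in one stage of the chain.

In a configuration `x` of `ℰ · ℱ`, the first `ℱ`-event is initial in `ℱ`, so it waits for the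
bundle `Φ_ℰ ↦ e`: hence `x` contains a final event of `ℰ`, and `x ∩ E` is maximal in `C(ℰ)`.
-/

open Classical

namespace PCKA

/-- A bundle event structure over event universe `Ev` and alphabet `A`:
a set of events, a conflict relation, a bundle relation, a partial labelling
(modelled via `Option`) and a set of final events. -/
structure BES (Ev A : Type) where
  E : Set Ev
  conflict : Ev → Ev → Prop
  bundle : Set Ev → Ev → Prop
  lab : Ev → Option A
  final : Set Ev

variable {Ev A : Type}

/-- Well-formedness of a bundle event structure. -/
def IsBES (ℰ : BES Ev A) : Prop :=
  (∀ e, ¬ ℰ.conflict e e) ∧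
  (∀ e e', ℰ.conflict e e' → ℰ.conflict e' e) ∧
  (∀ e e', ℰ.conflict e e' → e ∈ ℰ.E ∧ e' ∈ ℰ.E) ∧
  (∀ x e, ℰ.bundle x e → e ∈ ℰ.E ∧ x ⊆ ℰ.E ∧
    ∀ a ∈ x, ∀ b ∈ x, a ≠ b → ℰ.conflict a b) ∧
  (∀ e, ℰ.lab e ≠ none → e ∈ ℰ.E) ∧
  ℰ.final ⊆ ℰ.E ∧
  (∀ a ∈ ℰ.final, ∀ b ∈ ℰ.final, a ≠ b → ℰ.conflict a b)

/-- `α` is an event trace of `ℰ`: every event is enabled by each of its bundles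
and is distinct from and conflict-free with all earlier events. -/
def IsTrace (ℰ : BES Ev A) (α : List Ev) : Prop :=
  ∀ l e r, α = l ++ e :: r →
    e ∈ ℰ.E ∧
    (∀ x, ℰ.bundle x e → ∃ e' ∈ l, e' ∈ x) ∧
    (∀ e' ∈ l, e ≠ e' ∧ ¬ ℰ.conflict e e')

/-- A configuration is the set of events of some event trace (a linearisation). -/
def IsConfig (ℰ : BES Ev A) (x : Set Ev) : Prop :=
  ∃ α : List Ev, IsTrace ℰ α ∧ {e | e ∈ α} = x

/-- Adjacent occurrences in a list. -/
def traceAdj (α : List Ev) (a b : Ev) : Prop := ∃ l r, α = l ++ a :: b :: r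

/-- The order `≼_α` induced by an event trace: reflexive transitive closure of
adjacency in the trace. -/
def traceOrder (α : List Ev) : Ev → Ev → Prop := Relation.ReflTransGen (traceAdj α)

/-- The causal order `≼_x` of a configuration: the intersection of the orders
of all its linearisations. -/
def configOrder (ℰ : BES Ev A) (x : Set Ev) (a b : Ev) : Prop :=
  ∀ α, IsTrace ℰ α → {e | e ∈ α} = x → traceOrder α a b

/-- The labelling restricted to a set of events. -/
noncomputable def labOn (ℰ : BES Ev A) (x : Set Ev) : Ev → Option A :=
  fun e => if e ∈ x then ℰ.lab e else none

/-- `(x, o, l)` is the lposet of the configuration `x` of `ℰ`. -/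
def IsLposetOf (ℰ : BES Ev A) (x : Set Ev) (o : Ev → Ev → Prop)
    (l : Ev → Option A) : Prop :=
  IsConfig ℰ x ∧
  (∀ a b, o a b ↔ (a ∈ x ∧ b ∈ x ∧ configOrder ℰ x a b)) ∧
  l = labOn ℰ x

/-- The lposet `(x,ox,lx)` is a prefix of the lposet `(y,oy,ly)`. -/
def LposetPrefix (x : Set Ev) (ox : Ev → Ev → Prop) (lx : Ev → Option A)
    (y : Set Ev) (oy : Ev → Ev → Prop) (ly : Ev → Option A) : Prop :=
  x ⊆ y ∧
  (∀ e ∈ x, ly e = lx e) ∧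
  (∀ e e', oy e e' → e' ∈ x → e ∈ x ∧ ox e e')

/-- Restriction of a list to the elements of a set (the subsequence `α|_x`). -/
noncomputable def listRestrict (α : List Ev) (x : Set Ev) : List Ev :=
  α.filter (fun e => decide (e ∈ x))

/-- The sub-BES order `ℰ ⊑ ℱ`. -/
def SubBES (ℰ ℱ : BES Ev A) : Prop :=
  ℰ.E ⊆ ℱ.E ∧
  (∀ e e', ℰ.conflict e e' ↔ (ℱ.conflict e e' ∧ e ∈ ℰ.E ∧ e' ∈ ℰ.E)) ∧
  (∀ x e, ℰ.bundle x e → ℱ.bundle x e) ∧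
  (∀ x e, ℱ.bundle x e → e ∈ ℰ.E → x ⊆ ℰ.E ∧ ℰ.bundle x e) ∧
  (∀ e ∈ ℰ.E, ℰ.lab e = ℱ.lab e) ∧
  (∀ e, e ∈ ℰ.final ↔ (e ∈ ℱ.final ∧ e ∈ ℰ.E))

/-- `ℰ` is the componentwise union of the chain `c`. -/
def IsChainUnion (c : ℕ → BES Ev A) (ℰ : BES Ev A) : Prop :=
  ℰ.E = (⋃ i, (c i).E) ∧
  (∀ e e', ℰ.conflict e e' ↔ ∃ i, (c i).conflict e e') ∧
  (∀ x e, ℰ.bundle x e ↔ ∃ i, (c i).bundle x e) ∧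
  (∀ i, ∀ e ∈ (c i).E, ℰ.lab e = (c i).lab e) ∧
  (∀ e, e ∉ (⋃ i, (c i).E) → ℰ.lab e = none) ∧
  ℰ.final = (⋃ i, (c i).final)

/-- Immediate conflict. -/
def ImmConflict (ℰ : BES Ev A) (e e' : Ev) : Prop :=
  ℰ.conflict e e' ∧
  ∃ x, IsConfig ℰ x ∧ IsConfig ℰ (x ∪ {e}) ∧ IsConfig ℰ (x ∪ {e'})

/-- A partial cluster: pairwise immediately conflicting, equally pointed events. -/
def PartialCluster (ℰ : BES Ev A) (K : Set Ev) : Prop :=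
  K ⊆ ℰ.E ∧
  (∀ e ∈ K, ∀ e' ∈ K, e ≠ e' → ImmConflict ℰ e e') ∧
  (∀ e ∈ K, ∀ e' ∈ K, ∀ x, ℰ.bundle x e → ℰ.bundle x e')

/-- A cluster is a maximal partial cluster. -/
def Cluster (ℰ : BES Ev A) (K : Set Ev) : Prop :=
  PartialCluster ℰ K ∧ ∀ H, PartialCluster ℰ H → K ⊆ H → H = K

/-- `⟨e⟩`: the intersection of all clusters containing `e`. -/
def cell (ℰ : BES Ev A) (e : Ev) : Set Ev :=
  ⋂₀ {K | Cluster ℰ K ∧ e ∈ K}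

/-- `cfl x`: events in conflict with some event of `x`. -/
def cfl (ℰ : BES Ev A) (x : Set Ev) : Set Ev :=
  {e | e ∈ ℰ.E ∧ ∃ e' ∈ x, ℰ.conflict e e'}

/-- Confusion freeness. -/
def ConfusionFree (ℰ : BES Ev A) : Prop :=
  (∀ e e', ImmConflict ℰ e e' → e ∈ cell ℰ e') ∧
  (∀ x e, IsConfig ℰ x → cell ℰ e ∩ x = ∅ → IsConfig ℰ (x ∪ {e}) →
    ∀ e'' ∈ cell ℰ e, IsConfig ℰ (x ∪ {e''}))

/-- Initial events: those pointed by no bundle. -/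
def bInit (ℰ : BES Ev A) : Set Ev :=
  {e | e ∈ ℰ.E ∧ ∀ x, ¬ ℰ.bundle x e}

/-- Nondeterministic choice `ℰ + ℱ` (for disjoint BES). -/
def bchoice (ℰ ℱ : BES Ev A) : BES Ev A where
  E := ℰ.E ∪ ℱ.E
  conflict := fun e e' => ℰ.conflict e e' ∨ ℱ.conflict e e' ∨
    (e ∈ bInit ℰ ∧ e' ∈ bInit ℱ) ∨ (e ∈ bInit ℱ ∧ e' ∈ bInit ℰ) ∨
    (e ∈ ℰ.final ∧ e' ∈ ℱ.final) ∨ (e ∈ ℱ.final ∧ e' ∈ ℰ.final)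
  bundle := fun x e => ℰ.bundle x e ∨ ℱ.bundle x e
  lab := fun e => (ℰ.lab e).orElse (fun _ => ℱ.lab e)
  final := ℰ.final ∪ ℱ.final

/-- Sequential composition `ℰ · ℱ` (for disjoint BES). -/
def bseq (ℰ ℱ : BES Ev A) : BES Ev A where
  E := ℰ.E ∪ ℱ.E
  conflict := fun e e' => ℰ.conflict e e' ∨ ℱ.conflict e e'
  bundle := fun x e => ℰ.bundle x e ∨ ℱ.bundle x e ∨ (x = ℰ.final ∧ e ∈ bInit ℱ)
  lab := fun e => (ℰ.lab e).orElse (fun _ => ℱ.lab e)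
  final := ℱ.final

/-- Concurrent composition `ℰ ‖ ℱ` with fresh delimiter events `d₁, d₂`. -/
def bpar (ℰ ℱ : BES Ev A) (d₁ d₂ : Ev) : BES Ev A where
  E := ℰ.E ∪ ℱ.E ∪ {d₁, d₂}
  conflict := fun e e' => ℰ.conflict e e' ∨ ℱ.conflict e e'
  bundle := fun x e => ℰ.bundle x e ∨ ℱ.bundle x e ∨
    (x = {d₁} ∧ (e ∈ bInit ℰ ∨ e ∈ bInit ℱ)) ∨
    (x = ℰ.final ∧ e = d₂) ∨ (x = ℱ.final ∧ e = d₂)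
  lab := fun e => (ℰ.lab e).orElse (fun _ => ℱ.lab e)
  final := {d₂}

/-- Renaming of a BES along a map of events. -/
noncomputable def brename (g : Ev → Ev) (ℰ : BES Ev A) : BES Ev A where
  E := g '' ℰ.E
  conflict := fun e e' => ∃ a b, ℰ.conflict a b ∧ e = g a ∧ e' = g b
  bundle := fun x e => ∃ y a, ℰ.bundle y a ∧ x = g '' y ∧ e = g a
  lab := fun e => if h : ∃ a, a ∈ ℰ.E ∧ g a = e then ℰ.lab h.choose else none
  final := g '' ℰ.final

/-- `ℰ'` is a (fresh) copy of `ℰ`. -/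
def IsCopy (ℰ' ℰ : BES Ev A) : Prop :=
  ∃ g : Ev → Ev, Set.InjOn g ℰ.E ∧ ℰ' = brename g ℰ

/-- `𝒮` is the binary Kleene product `ℰ * ℱ`: the componentwise union of the
chain `ℱ ⊑ ℱ + ℰ·ℱ ⊑ ⋯` built with fresh disjoint copies at each stage. -/
def IsStarOf (ℰ ℱ 𝒮 : BES Ev A) : Prop :=
  ∃ c : ℕ → BES Ev A,
    IsCopy (c 0) ℱ ∧
    (∀ i, ∃ ℰ' ℱ' : BES Ev A, IsCopy ℰ' ℰ ∧ IsCopy ℱ' ℱ ∧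
      ℱ'.E ∩ (ℰ'.E ∪ (c i).E) = ∅ ∧ ℰ'.E ∩ (c i).E = ∅ ∧
      c (i + 1) = bchoice ℱ' (bseq ℰ' (c i)) ∧
      SubBES (c i) (c (i + 1))) ∧
    IsChainUnion c 𝒮

/-- The basic BES `0` (deadlock). -/
def besZero : BES Ev A :=
  ⟨∅, fun _ _ => False, fun _ _ => False, fun _ => none, ∅⟩

/-- The basic BES `1` (skip), with a single unlabelled final event. -/
def besOne (e : Ev) : BES Ev A :=
  ⟨{e}, fun _ _ => False, fun _ _ => False, fun _ => none, {e}⟩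

/-- The basic BES for a one-step action `a`. -/
noncomputable def besAct (e : Ev) (a : A) : BES Ev A :=
  ⟨{e}, fun _ _ => False, fun _ _ => False,
    fun e' => if e' = e then some a else none, {e}⟩

/-- Regular BES: built from the basic BES by `+`, `·`, `‖` and `*`. -/
inductive Regular : BES Ev A → Prop
  | zero : Regular besZero
  | one (e : Ev) : Regular (besOne e)
  | act (e : Ev) (a : A) : Regular (besAct e a)
  | choice {ℰ ℱ : BES Ev A} : Regular ℰ → Regular ℱ → ℰ.E ∩ ℱ.E = ∅ →
      Regular (bchoice ℰ ℱ)
  | seq {ℰ ℱ : BES Ev A} : Regular ℰ → Regular ℱ → ℰ.E ∩ ℱ.E = ∅ →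
      Regular (bseq ℰ ℱ)
  | par {ℰ ℱ : BES Ev A} (d₁ d₂ : Ev) : Regular ℰ → Regular ℱ →
      ℰ.E ∩ ℱ.E = ∅ → d₁ ≠ d₂ → d₁ ∉ ℰ.E ∪ ℱ.E → d₂ ∉ ℰ.E ∪ ℱ.E →
      Regular (bpar ℰ ℱ d₁ d₂)
  | star {ℰ ℱ 𝒮 : BES Ev A} : Regular ℰ → Regular ℱ → IsStarOf ℰ ℱ 𝒮 →
      Regular 𝒮

/-- A probability distribution on a BES: a discrete distribution on events
whose support is contained in a single cell `⟨e⟩`. -/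
def IsDistOn (ℰ : BES Ev A) (p : PMF Ev) : Prop :=
  ∃ e ∈ ℰ.E, p.support ⊆ cell ℰ e

/-- A probabilistic bundle event structure: a BES with a set of distributions. -/
structure PBES (Ev A : Type) where
  bes : BES Ev A
  dists : Set (PMF Ev)

/-- Well-formedness of a probabilistic BES. -/
def IsPBES (P : PBES Ev A) : Prop :=
  IsBES P.bes ∧ ConfusionFree P.bes ∧
  (∀ p ∈ P.dists, IsDistOn P.bes p) ∧
  (∀ e ∈ P.bes.E, ∃ p ∈ P.dists, e ∈ p.support)

/-- No bundle set contains a final event. -/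
def NoFinalBundle (ℰ : BES Ev A) : Prop :=
  ∀ x e, ℰ.bundle x e → x ∩ ℰ.final = ∅

/-- Probabilistic prefix: `x ⊑ Δ` iff `Δ = Σ_{e ∈ supp p} p e · δ_{x ∪ {e}}`
for some `p` in the distribution set, with `supp p` disjoint from `x` and all
extensions configurations. -/
def ProbPrefix (P : PBES Ev A) (x : Set Ev) (Δ : PMF (Set Ev)) : Prop :=
  IsConfig P.bes x ∧
  ∃ p ∈ P.dists, p.support ∩ x = ∅ ∧
    (∀ e ∈ p.support, IsConfig P.bes (x ∪ {e})) ∧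
    Δ = p.bind (fun e => PMF.pure (x ∪ {e}))

/-- Lifting of a relation `S ⊆ X × 𝒟(Y)` to `𝒟(X) × 𝒟(Y)`. -/
def Lift {X Y : Type} (S : X → PMF Y → Prop) (Δ : PMF X) (Θ : PMF Y) : Prop :=
  ∃ (ι : Type) (_ : Countable ι) (w : PMF ι) (xs : ι → X) (Θs : ι → PMF Y),
    Δ = w.bind (fun i => PMF.pure (xs i)) ∧
    (∀ i, w i ≠ 0 → S (xs i) (Θs i)) ∧
    Θ = w.bind Θs

/-- The labelled events of a configuration. -/
def hatSet (ℰ : BES Ev A) (x : Set Ev) : Set Ev :=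
  {e | e ∈ x ∧ ℰ.lab e ≠ none}

/-- Implementation (subsumption) `x ⊑_s y` between configurations: a
label-preserving monotonic bijection from the labelled events of `y` to those
of `x`. -/
def Subsum (ℰ : BES Ev A) (x : Set Ev) (ℱ : BES Ev A) (y : Set Ev) : Prop :=
  ∃ f : Ev → Ev, Set.BijOn f (hatSet ℱ y) (hatSet ℰ x) ∧
    (∀ e ∈ hatSet ℱ y, ℰ.lab (f e) = ℱ.lab e) ∧
    (∀ e e', e ∈ hatSet ℱ y → e' ∈ hatSet ℱ y →
      configOrder ℱ y e e' → configOrder ℰ x (f e) (f e'))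

/-- Probabilistic simulation from `P` to `Q`. -/
def IsSimulation (P Q : PBES Ev A) (S : Set Ev → PMF (Set Ev) → Prop) : Prop :=
  S ∅ (PMF.pure ∅) ∧
  (∀ x Θ, S x Θ → IsConfig P.bes x ∧
    ∀ y ∈ Θ.support, IsConfig Q.bes y ∧ Subsum P.bes x Q.bes y) ∧
  (∀ x Θ Δ', S x Θ → ProbPrefix P x Δ' →
    ∃ Θ', Relation.ReflTransGen (Lift (ProbPrefix Q)) Θ Θ' ∧ Lift S Δ' Θ') ∧
  (∀ x Θ, S x Θ → (x ∩ P.bes.final).Nonempty →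
    ∀ y ∈ Θ.support, (y ∩ Q.bes.final).Nonempty)

/-- `P ⊑ Q`: there exists a probabilistic simulation from `P` to `Q`. -/
def Sim (P Q : PBES Ev A) : Prop := ∃ S, IsSimulation P Q S

/-- Nondeterministic choice of pBES. -/
def pch (P Q : PBES Ev A) : PBES Ev A :=
  ⟨bchoice P.bes Q.bes, P.dists ∪ Q.dists⟩

/-- Sequential composition of pBES. -/
def pseq (P Q : PBES Ev A) : PBES Ev A :=
  ⟨bseq P.bes Q.bes, P.dists ∪ Q.dists⟩

/-- Concurrent composition of pBES with fresh delimiters `d₁, d₂`. -/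
noncomputable def ppar (P Q : PBES Ev A) (d₁ d₂ : Ev) : PBES Ev A :=
  ⟨bpar P.bes Q.bes d₁ d₂, P.dists ∪ Q.dists ∪ {PMF.pure d₁, PMF.pure d₂}⟩

/-- The sub-pBES order. -/
def SubPBES (P Q : PBES Ev A) : Prop :=
  SubBES P.bes Q.bes ∧ P.dists = {p | p ∈ Q.dists ∧ p.support ⊆ P.bes.E}

/-- Renaming of a pBES. -/
noncomputable def prename (g : Ev → Ev) (P : PBES Ev A) : PBES Ev A :=
  ⟨brename g P.bes, (fun p => p.map g) '' P.dists⟩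

/-- `P'` is a (fresh) copy of the pBES `P`. -/
def IsPCopy (P' P : PBES Ev A) : Prop :=
  ∃ g : Ev → Ev, Set.InjOn g P.bes.E ∧ P' = prename g P

/-- Componentwise union of a chain of pBES. -/
def IsPChainUnion (c : ℕ → PBES Ev A) (P : PBES Ev A) : Prop :=
  IsChainUnion (fun i => (c i).bes) P.bes ∧ P.dists = ⋃ i, (c i).dists

/-- `S` is the binary Kleene product `P * G` of pBES. -/
def IsPStarOf (P G S : PBES Ev A) : Prop :=
  ∃ c : ℕ → PBES Ev A,
    IsPCopy (c 0) G ∧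
    (∀ i, ∃ P' G' : PBES Ev A, IsPCopy P' P ∧ IsPCopy G' G ∧
      G'.bes.E ∩ (P'.bes.E ∪ (c i).bes.E) = ∅ ∧ P'.bes.E ∩ (c i).bes.E = ∅ ∧
      c (i + 1) = pch G' (pseq P' (c i)) ∧
      SubPBES (c i) (c (i + 1))) ∧
    IsPChainUnion c S

section Traces

variable {ℰ 𝒢 : BES Ev A} {α : List Ev}

lemma IsBES.bundle_subset (h : IsBES ℰ) {z : Set Ev} {e : Ev} (hz : ℰ.bundle z e) : z ⊆ ℰ.E :=
  (h.2.2.2.1 z e hz).2.1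

lemma IsBES.final_subset (h : IsBES ℰ) : ℰ.final ⊆ ℰ.E :=
  h.2.2.2.2.2.1

def IsComponent (ℰ 𝒢 : BES Ev A) : Prop :=
  (∀ z e, ℰ.bundle z e → 𝒢.bundle z e) ∧ ∀ e e', ℰ.conflict e e' → 𝒢.conflict e e'

lemma IsTrace.mem_E (hα : IsTrace ℰ α) {e : Ev} (he : e ∈ α) : e ∈ ℰ.E := by
  obtain ⟨l, r, rfl⟩ := List.append_of_mem he
  exact (hα l e r rfl).1

lemma IsTrace.exists_mem_of_bundle (hα : IsTrace ℰ α) {z : Set Ev} {e : Ev} (he : e ∈ α)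
    (hz : ℰ.bundle z e) : ∃ e' ∈ α, e' ∈ z := by
  obtain ⟨l, r, rfl⟩ := List.append_of_mem he
  obtain ⟨e', he', hez⟩ := (hα l e r rfl).2.1 z hz
  exact ⟨e', List.mem_append_left _ he', hez⟩

lemma IsTrace.not_conflict (hsymm : ∀ a b, ℰ.conflict a b → ℰ.conflict b a)
    (hα : IsTrace ℰ α) {a b : Ev} (ha : a ∈ α) (hb : b ∈ α) (hab : a ≠ b) :
    ¬ ℰ.conflict a b := by
  obtain ⟨l, r, rfl⟩ := List.append_of_mem ha
  rcases List.mem_append.1 hb with hb | hb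
  · exact ((hα l a r rfl).2.2 b hb).2
  · obtain ⟨l', r', rfl⟩ := List.append_of_mem ((List.mem_cons.1 hb).resolve_left hab.symm)
    exact fun h => ((hα (l ++ a :: l') b r' (by simp)).2.2 a (by simp)).2 (hsymm a b h)

lemma IsTrace.exists_mem_bInit (hℰ : IsBES ℰ) (hc : IsComponent ℰ 𝒢) (hα : IsTrace 𝒢 α)
    (h : ∃ e ∈ α, e ∈ ℰ.E) : ∃ e ∈ α, e ∈ bInit ℰ := by
  obtain ⟨e, he⟩ : ∃ e, α.find? (fun e => decide (e ∈ ℰ.E)) = some e :=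
    Option.isSome_iff_exists.1 (List.find?_isSome.2 (by simpa using h))
  obtain ⟨heE, l, r, rfl, hl⟩ := List.find?_eq_some_iff_append.1 he
  refine ⟨e, by simp, by simpa using heE, fun z hz => ?_⟩
  obtain ⟨e', he', hez⟩ := (hα l e r rfl).2.1 z (hc.1 z e hz)
  simpa [hℰ.bundle_subset hz hez] using hl e' he'

lemma IsTrace.filter_mem_E (hℰ : IsBES ℰ) (hc : IsComponent ℰ 𝒢) (hα : IsTrace 𝒢 α) :
    IsTrace ℰ (α.filter (fun e => decide (e ∈ ℰ.E))) := by
  intro l' e r' heq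
  obtain ⟨l, r₀, rfl, rfl, hr⟩ := List.filter_eq_append_iff.1 heq
  obtain ⟨m, r, rfl, hm, heE, -⟩ := List.filter_eq_cons_iff.1 hr
  have H := hα (l ++ m) e r (by simp)
  refine ⟨by simpa using heE, fun z hz => ?_, fun e' he' => ?_⟩
  · obtain ⟨e', he', hez⟩ := H.2.1 z (hc.1 z e hz)
    have he'E := hℰ.bundle_subset hz hez
    refine ⟨e', List.mem_filter.2 ⟨?_, by simpa using he'E⟩, hez⟩
    rcases List.mem_append.1 he' with h | h
    · exact h
    · exact absurd he'E (by simpa using hm e' h)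
  · have H' := H.2.2 e' (List.mem_append_left _ (List.mem_filter.1 he').1)
    exact ⟨H'.1, fun h => H'.2 (hc.2 e e' h)⟩

lemma IsConfig.subset_E {x : Set Ev} (hx : IsConfig ℰ x) : x ⊆ ℰ.E := by
  obtain ⟨α, hα, rfl⟩ := hx
  exact fun e he => hα.mem_E he

lemma IsConfig.inter_E (hℰ : IsBES ℰ) (hc : IsComponent ℰ 𝒢) {x : Set Ev}
    (hx : IsConfig 𝒢 x) : IsConfig ℰ (x ∩ ℰ.E) := by
  obtain ⟨α, hα, rfl⟩ := hx
  exact ⟨_, hα.filter_mem_E hℰ hc, by ext; simp⟩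

end Traces

def FinalMaximal (ℰ : BES Ev A) : Prop :=
  ∀ x y, IsConfig ℰ x → IsConfig ℰ y → (x ∩ ℰ.final).Nonempty → x ⊆ y → y = x

lemma FinalMaximal.inter_E_subset {ℰ 𝒢 : BES Ev A} (hmax : FinalMaximal ℰ) (hℰ : IsBES ℰ)
    (hc : IsComponent ℰ 𝒢) {x y : Set Ev} (hx : IsConfig 𝒢 x) (hy : IsConfig 𝒢 y)
    (hfin : (x ∩ ℰ.final).Nonempty) (hxy : x ⊆ y) : y ∩ ℰ.E ⊆ x := by
  obtain ⟨f, hfx, hff⟩ := hfin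
  rw [hmax _ _ (hx.inter_E hℰ hc) (hy.inter_E hℰ hc) ⟨f, ⟨hfx, hℰ.final_subset hff⟩, hff⟩
    (Set.inter_subset_inter_left _ hxy)]
  exact Set.inter_subset_left

lemma finalMaximal_of_subsingleton {ℰ : BES Ev A} (h : ℰ.E.Subsingleton) : FinalMaximal ℰ := by
  rintro x y - hy ⟨f, hfx, -⟩ hxy
  exact Set.Subset.antisymm
    (fun e he => h (hy.subset_E he) (hy.subset_E (hxy hfx)) ▸ hfx) hxy

lemma isBES_besZero : IsBES (besZero : BES Ev A) := by
  simp [IsBES, besZero]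

lemma isBES_besOne (e : Ev) : IsBES (besOne e : BES Ev A) := by
  simp [IsBES, besOne]

lemma isBES_besAct (e : Ev) (a : A) : IsBES (besAct e a) := by
  simp [IsBES, besAct]

section Choice

variable {ℰ ℱ : BES Ev A}

lemma isComponent_bchoice_left : IsComponent ℰ (bchoice ℰ ℱ) :=
  ⟨fun _ _ => Or.inl, fun _ _ => Or.inl⟩

lemma isComponent_bchoice_right : IsComponent ℱ (bchoice ℰ ℱ) :=
  ⟨fun _ _ => Or.inr, fun _ _ h => Or.inr (Or.inl h)⟩

lemma isBES_bchoice (hE : IsBES ℰ) (hF : IsBES ℱ) (hd : ℰ.E ∩ ℱ.E = ∅) :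
    IsBES (bchoice ℰ ℱ) := by
  have hd' := Set.disjoint_iff_inter_eq_empty.2 hd
  obtain ⟨hiE, hsE, hdE, hbE, hlE, hfEE, hfCE⟩ := hE
  obtain ⟨hiF, hsF, hdF, hbF, hlF, hfEF, hfCF⟩ := hF
  refine ⟨?_, ?_, ?_, ?_, ?_, ?_, ?_⟩
  · rintro e (h | h | ⟨h1, h2⟩ | ⟨h1, h2⟩ | ⟨h1, h2⟩ | ⟨h1, h2⟩)
    · exact hiE e h
    · exact hiF e h
    · exact hd'.notMem_of_mem_left h1.1 h2.1
    · exact hd'.notMem_of_mem_left h2.1 h1.1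
    · exact hd'.notMem_of_mem_left (hfEE h1) (hfEF h2)
    · exact hd'.notMem_of_mem_left (hfEE h2) (hfEF h1)
  · rintro e e' (h | h | h | h | h | h)
    · exact Or.inl (hsE _ _ h)
    · exact Or.inr (Or.inl (hsF _ _ h))
    all_goals simp only [bchoice]; tauto
  · rintro e e' (h | h | h | h | h | h)
    · exact ⟨Or.inl (hdE _ _ h).1, Or.inl (hdE _ _ h).2⟩
    · exact ⟨Or.inr (hdF _ _ h).1, Or.inr (hdF _ _ h).2⟩
    · exact ⟨Or.inl h.1.1, Or.inr h.2.1⟩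
    · exact ⟨Or.inr h.1.1, Or.inl h.2.1⟩
    · exact ⟨Or.inl (hfEE h.1), Or.inr (hfEF h.2)⟩
    · exact ⟨Or.inr (hfEF h.1), Or.inl (hfEE h.2)⟩
  · rintro z e (h | h)
    · obtain ⟨h1, h2, h3⟩ := hbE z e h
      exact ⟨Or.inl h1, fun a ha => Or.inl (h2 ha), fun a ha b hb hab => Or.inl (h3 a ha b hb hab)⟩
    · obtain ⟨h1, h2, h3⟩ := hbF z e h
      exact ⟨Or.inr h1, fun a ha => Or.inr (h2 ha),
        fun a ha b hb hab => Or.inr (Or.inl (h3 a ha b hb hab))⟩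
  · intro e h
    simp only [bchoice, Option.orElse_eq_or, ne_eq, Option.or_eq_none_iff, not_and_or] at h
    exact h.imp (hlE e) (hlF e)
  · exact Set.union_subset_union hfEE hfEF
  · rintro a (ha | ha) b (hb | hb) hab
    · exact Or.inl (hfCE a ha b hb hab)
    · exact Or.inr (Or.inr (Or.inr (Or.inr (Or.inl ⟨ha, hb⟩))))
    · exact Or.inr (Or.inr (Or.inr (Or.inr (Or.inr ⟨ha, hb⟩))))
    · exact Or.inr (Or.inl (hfCF a ha b hb hab))

lemma IsConfig.subset_or_subset_of_bchoice (hE : IsBES ℰ) (hF : IsBES ℱ) (hd : ℰ.E ∩ ℱ.E = ∅)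
    {x : Set Ev} (hx : IsConfig (bchoice ℰ ℱ) x) : x ⊆ ℰ.E ∨ x ⊆ ℱ.E := by
  have hxEF := hx.subset_E
  obtain ⟨α, hα, rfl⟩ := hx
  by_contra! h
  obtain ⟨⟨a, ha, haE⟩, ⟨b, hb, hbF⟩⟩ := And.imp Set.not_subset.1 Set.not_subset.1 h
  obtain ⟨e, he, heI⟩ :=
    hα.exists_mem_bInit hE isComponent_bchoice_left ⟨b, hb, (hxEF hb).resolve_right hbF⟩
  obtain ⟨f, hf, hfI⟩ :=
    hα.exists_mem_bInit hF isComponent_bchoice_right ⟨a, ha, (hxEF ha).resolve_left haE⟩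
  exact hα.not_conflict (isBES_bchoice hE hF hd).2.1 he hf
    ((Set.disjoint_iff_inter_eq_empty.2 hd).ne_of_mem heI.1 hfI.1)
    (Or.inr (Or.inr (Or.inl ⟨heI, hfI⟩)))

lemma finalMaximal_bchoice (hE : IsBES ℰ) (hF : IsBES ℱ) (hd : ℰ.E ∩ ℱ.E = ∅)
    (hmE : FinalMaximal ℰ) (hmF : FinalMaximal ℱ) : FinalMaximal (bchoice ℰ ℱ) := by
  have hd' := Set.disjoint_iff_inter_eq_empty.2 hd
  rintro x y hx hy ⟨f, hfx, hff⟩ hxy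
  refine Set.Subset.antisymm (fun e he => ?_) hxy
  rcases hy.subset_or_subset_of_bchoice hE hF hd with hyE | hyF
  · have hfE : f ∈ ℰ.final :=
      hff.resolve_right fun h => hd'.notMem_of_mem_left (hyE (hxy hfx)) (hF.final_subset h)
    exact hmE.inter_E_subset hE isComponent_bchoice_left hx hy ⟨f, hfx, hfE⟩ hxy ⟨he, hyE he⟩
  · have hfF : f ∈ ℱ.final :=
      hff.resolve_left fun h => hd'.notMem_of_mem_left (hE.final_subset h) (hyF (hxy hfx))
    exact hmF.inter_E_subset hF isComponent_bchoice_right hx hy ⟨f, hfx, hfF⟩ hxy ⟨he, hyF he⟩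

end Choice

section Seq

variable {ℰ ℱ : BES Ev A}

lemma isComponent_bseq_left : IsComponent ℰ (bseq ℰ ℱ) :=
  ⟨fun _ _ => Or.inl, fun _ _ => Or.inl⟩

lemma isComponent_bseq_right : IsComponent ℱ (bseq ℰ ℱ) :=
  ⟨fun _ _ h => Or.inr (Or.inl h), fun _ _ => Or.inr⟩

lemma isBES_bseq (hE : IsBES ℰ) (hF : IsBES ℱ) : IsBES (bseq ℰ ℱ) := by
  obtain ⟨hiE, hsE, hdE, hbE, hlE, hfEE, hfCE⟩ := hE
  obtain ⟨hiF, hsF, hdF, hbF, hlF, hfEF, hfCF⟩ := hF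
  refine ⟨?_, ?_, ?_, ?_, ?_, ?_, fun a ha b hb hab => Or.inr (hfCF a ha b hb hab)⟩
  · rintro e (h | h)
    · exact hiE e h
    · exact hiF e h
  · rintro e e' (h | h)
    · exact Or.inl (hsE _ _ h)
    · exact Or.inr (hsF _ _ h)
  · rintro e e' (h | h)
    · exact ⟨Or.inl (hdE _ _ h).1, Or.inl (hdE _ _ h).2⟩
    · exact ⟨Or.inr (hdF _ _ h).1, Or.inr (hdF _ _ h).2⟩
  · rintro z e (h | h | ⟨rfl, he⟩)
    · obtain ⟨h1, h2, h3⟩ := hbE z e h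
      exact ⟨Or.inl h1, fun a ha => Or.inl (h2 ha), fun a ha b hb hab => Or.inl (h3 a ha b hb hab)⟩
    · obtain ⟨h1, h2, h3⟩ := hbF z e h
      exact ⟨Or.inr h1, fun a ha => Or.inr (h2 ha), fun a ha b hb hab => Or.inr (h3 a ha b hb hab)⟩
    · exact ⟨Or.inr he.1, fun a ha => Or.inl (hfEE ha),
        fun a ha b hb hab => Or.inl (hfCE a ha b hb hab)⟩
  · intro e h
    simp only [bseq, Option.orElse_eq_or, ne_eq, Option.or_eq_none_iff, not_and_or] at h
    exact h.imp (hlE e) (hlF e)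
  · exact hfEF.trans Set.subset_union_right

lemma IsConfig.inter_final_nonempty_of_bseq (hF : IsBES ℱ) {x : Set Ev}
    (hx : IsConfig (bseq ℰ ℱ) x) (hne : (x ∩ ℱ.E).Nonempty) : (x ∩ ℰ.final).Nonempty := by
  obtain ⟨α, hα, rfl⟩ := hx
  obtain ⟨f, hf, hfI⟩ := hα.exists_mem_bInit hF isComponent_bseq_right hne
  exact hα.exists_mem_of_bundle hf (Or.inr (Or.inr ⟨rfl, hfI⟩))

lemma finalMaximal_bseq (hE : IsBES ℰ) (hF : IsBES ℱ) (hmE : FinalMaximal ℰ)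
    (hmF : FinalMaximal ℱ) : FinalMaximal (bseq ℰ ℱ) := by
  rintro x y hx hy ⟨f, hfx, hff⟩ hxy
  have hxE := hx.inter_final_nonempty_of_bseq hF ⟨f, hfx, hF.final_subset hff⟩
  refine Set.Subset.antisymm (fun e he => ?_) hxy
  rcases hy.subset_E he with heE | heF
  · exact hmE.inter_E_subset hE isComponent_bseq_left hx hy hxE hxy ⟨he, heE⟩
  · exact hmF.inter_E_subset hF isComponent_bseq_right hx hy ⟨f, hfx, hff⟩ hxy ⟨he, heF⟩

end Seq

section Par

variable {ℰ ℱ : BES Ev A} {d₁ d₂ : Ev}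

lemma isComponent_bpar_left : IsComponent ℰ (bpar ℰ ℱ d₁ d₂) :=
  ⟨fun _ _ => Or.inl, fun _ _ => Or.inl⟩

lemma isComponent_bpar_right : IsComponent ℱ (bpar ℰ ℱ d₁ d₂) :=
  ⟨fun _ _ h => Or.inr (Or.inl h), fun _ _ => Or.inr⟩

lemma isBES_bpar (hE : IsBES ℰ) (hF : IsBES ℱ) : IsBES (bpar ℰ ℱ d₁ d₂) := by
  obtain ⟨hiE, hsE, hdE, hbE, hlE, hfEE, hfCE⟩ := hE
  obtain ⟨hiF, hsF, hdF, hbF, hlF, hfEF, hfCF⟩ := hF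
  refine ⟨?_, ?_, ?_, ?_, ?_, ?_, ?_⟩
  · rintro e (h | h)
    · exact hiE e h
    · exact hiF e h
  · rintro e e' (h | h)
    · exact Or.inl (hsE _ _ h)
    · exact Or.inr (hsF _ _ h)
  · rintro e e' (h | h)
    · exact ⟨Or.inl (Or.inl (hdE _ _ h).1), Or.inl (Or.inl (hdE _ _ h).2)⟩
    · exact ⟨Or.inl (Or.inr (hdF _ _ h).1), Or.inl (Or.inr (hdF _ _ h).2)⟩
  · rintro z e (h | h | ⟨rfl, he⟩ | ⟨rfl, rfl⟩ | ⟨rfl, rfl⟩)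
    · obtain ⟨h1, h2, h3⟩ := hbE z e h
      exact ⟨Or.inl (Or.inl h1), fun a ha => Or.inl (Or.inl (h2 ha)),
        fun a ha b hb hab => Or.inl (h3 a ha b hb hab)⟩
    · obtain ⟨h1, h2, h3⟩ := hbF z e h
      exact ⟨Or.inl (Or.inr h1), fun a ha => Or.inl (Or.inr (h2 ha)),
        fun a ha b hb hab => Or.inr (h3 a ha b hb hab)⟩
    · refine ⟨Or.inl (he.imp And.left And.left), ?_, ?_⟩
      · rintro a rfl
        exact Or.inr (Or.inl rfl)
      · rintro a rfl b rfl hab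
        exact absurd rfl hab
    · exact ⟨Or.inr (Or.inr rfl), fun a ha => Or.inl (Or.inl (hfEE ha)),
        fun a ha b hb hab => Or.inl (hfCE a ha b hb hab)⟩
    · exact ⟨Or.inr (Or.inr rfl), fun a ha => Or.inl (Or.inr (hfEF ha)),
        fun a ha b hb hab => Or.inr (hfCF a ha b hb hab)⟩
  · intro e h
    simp only [bpar, Option.orElse_eq_or, ne_eq, Option.or_eq_none_iff, not_and_or] at h
    exact Or.inl (h.imp (hlE e) (hlF e))
  · rintro e rfl
    exact Or.inr (Or.inr rfl)
  · rintro a rfl b rfl hab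
    exact absurd rfl hab

lemma IsConfig.mem_of_bpar (hE : IsBES ℰ) {x : Set Ev} (hx : IsConfig (bpar ℰ ℱ d₁ d₂) x)
    (hne : (x ∩ ℰ.E).Nonempty) : d₁ ∈ x := by
  obtain ⟨α, hα, rfl⟩ := hx
  obtain ⟨e, he, heI⟩ := hα.exists_mem_bInit hE isComponent_bpar_left hne
  obtain ⟨d, hd, rfl⟩ := hα.exists_mem_of_bundle he (Or.inr (Or.inr (Or.inl ⟨rfl, Or.inl heI⟩)))
  exact hd

lemma IsConfig.inter_final_nonempty_of_bpar {x : Set Ev} (hx : IsConfig (bpar ℰ ℱ d₁ d₂) x)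
    (hd₂ : d₂ ∈ x) : (x ∩ ℰ.final).Nonempty ∧ (x ∩ ℱ.final).Nonempty := by
  obtain ⟨α, hα, rfl⟩ := hx
  exact ⟨hα.exists_mem_of_bundle hd₂ (Or.inr (Or.inr (Or.inr (Or.inl ⟨rfl, rfl⟩)))),
    hα.exists_mem_of_bundle hd₂ (Or.inr (Or.inr (Or.inr (Or.inr ⟨rfl, rfl⟩))))⟩

lemma finalMaximal_bpar (hE : IsBES ℰ) (hF : IsBES ℱ) (hmE : FinalMaximal ℰ)
    (hmF : FinalMaximal ℱ) : FinalMaximal (bpar ℰ ℱ d₁ d₂) := by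
  rintro x y hx hy ⟨f, hfx, rfl : f = d₂⟩ hxy
  obtain ⟨hxE, hxF⟩ := hx.inter_final_nonempty_of_bpar hfx
  have hd₁ : d₁ ∈ x := hx.mem_of_bpar hE (hxE.mono (Set.inter_subset_inter_right _ hE.final_subset))
  refine Set.Subset.antisymm (fun e he => ?_) hxy
  rcases hy.subset_E he with (heE | heF) | rfl | rfl
  · exact hmE.inter_E_subset hE isComponent_bpar_left hx hy hxE hxy ⟨he, heE⟩
  · exact hmF.inter_E_subset hF isComponent_bpar_right hx hy hxF hxy ⟨he, heF⟩
  · exact hd₁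
  · exact hfx

end Par

section Rename

variable {ℰ : BES Ev A} {g : Ev → Ev}

lemma isBES_brename (hℰ : IsBES ℰ) (hg : Set.InjOn g ℰ.E) : IsBES (brename g ℰ) := by
  obtain ⟨hiE, hsE, hdE, hbE, hlE, hfEE, hfCE⟩ := hℰ
  refine ⟨?_, ?_, ?_, ?_, ?_, Set.image_mono hfEE, ?_⟩
  · rintro e ⟨a, b, hab, rfl, hgb⟩
    exact hiE a (hg (hdE _ _ hab).1 (hdE _ _ hab).2 hgb ▸ hab)
  · rintro e e' ⟨a, b, hab, rfl, rfl⟩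
    exact ⟨b, a, hsE _ _ hab, rfl, rfl⟩
  · rintro e e' ⟨a, b, hab, rfl, rfl⟩
    exact ⟨⟨a, (hdE _ _ hab).1, rfl⟩, ⟨b, (hdE _ _ hab).2, rfl⟩⟩
  · rintro z e ⟨y, a, hy, rfl, rfl⟩
    obtain ⟨h1, h2, h3⟩ := hbE y a hy
    refine ⟨⟨a, h1, rfl⟩, Set.image_mono h2, ?_⟩
    rintro _ ⟨b, hb, rfl⟩ _ ⟨b', hb', rfl⟩ hbb
    exact ⟨b, b', h3 b hb b' hb' (ne_of_apply_ne g hbb), rfl, rfl⟩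
  · intro e h
    by_contra hex
    exact h (dif_neg (by simpa [brename] using hex))
  · rintro _ ⟨a, ha, rfl⟩ _ ⟨b, hb, rfl⟩ hab
    exact ⟨a, b, hfCE a ha b hb (ne_of_apply_ne g hab), rfl, rfl⟩

lemma exists_map_eq_of_forall_mem_image {S : Set Ev} :
    ∀ {β : List Ev}, (∀ e ∈ β, e ∈ g '' S) → ∃ β₀ : List Ev, (∀ a ∈ β₀, a ∈ S) ∧ β₀.map g = β
  | [], _ => ⟨[], by simp, rfl⟩
  | b :: β, h => by
    obtain ⟨a, ha, rfl⟩ := h b List.mem_cons_self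
    obtain ⟨β₀, hβ₀, rfl⟩ :=
      exists_map_eq_of_forall_mem_image fun e he => h e (List.mem_cons_of_mem _ he)
    exact ⟨a :: β₀, by simpa [ha] using hβ₀, rfl⟩

lemma IsTrace.of_brename (hℰ : IsBES ℰ) (hg : Set.InjOn g ℰ.E) {α : List Ev}
    (hαE : ∀ a ∈ α, a ∈ ℰ.E) (hα : IsTrace (brename g ℰ) (α.map g)) : IsTrace ℰ α := by
  rintro l e r rfl
  have H := hα (l.map g) (g e) (r.map g) (by simp)
  have hlE : ∀ a ∈ l, a ∈ ℰ.E := fun a ha => hαE a (by simp [ha])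
  have heE : e ∈ ℰ.E := hαE e (by simp)
  refine ⟨heE, fun z hz => ?_, fun e' he' => ?_⟩
  · obtain ⟨_, ha, b, hbz, hab⟩ := H.2.1 (g '' z) ⟨z, e, hz, rfl, rfl⟩
    obtain ⟨a, hal, rfl⟩ := List.mem_map.1 ha
    exact ⟨a, hal, hg (hℰ.bundle_subset hz hbz) (hlE a hal) hab ▸ hbz⟩
  · have H' := H.2.2 (g e') (List.mem_map_of_mem he')
    exact ⟨fun h => H'.1 (congrArg g h), fun h => H'.2 ⟨e, e', h, rfl, rfl⟩⟩

lemma IsConfig.exists_of_brename (hℰ : IsBES ℰ) (hg : Set.InjOn g ℰ.E) {x : Set Ev}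
    (hx : IsConfig (brename g ℰ) x) : ∃ x₀, IsConfig ℰ x₀ ∧ g '' x₀ = x := by
  obtain ⟨α, hα, rfl⟩ := hx
  obtain ⟨α₀, hα₀E, rfl⟩ := exists_map_eq_of_forall_mem_image fun e he => hα.mem_E he
  exact ⟨{a | a ∈ α₀}, ⟨α₀, hα.of_brename hℰ hg hα₀E, rfl⟩, by ext; simp⟩

lemma finalMaximal_brename (hℰ : IsBES ℰ) (hg : Set.InjOn g ℰ.E) (hmax : FinalMaximal ℰ) :
    FinalMaximal (brename g ℰ) := by
  rintro x y hx hy ⟨_, hfx, a, ha, rfl⟩ hxy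
  obtain ⟨x₀, hx₀, rfl⟩ := hx.exists_of_brename hℰ hg
  obtain ⟨y₀, hy₀, rfl⟩ := hy.exists_of_brename hℰ hg
  obtain ⟨b, hb, hba⟩ := hfx
  have hab : a = b := hg (hℰ.final_subset ha) (hx₀.subset_E hb) hba.symm
  rw [hmax x₀ y₀ hx₀ hy₀ ⟨b, hb, hab ▸ ha⟩
    ((hg.image_subset_image_iff hx₀.subset_E hy₀.subset_E).1 hxy)]

lemma IsCopy.isBES_and_finalMaximal {ℰ' : BES Ev A} (hc : IsCopy ℰ' ℰ)
    (h : IsBES ℰ ∧ FinalMaximal ℰ) : IsBES ℰ' ∧ FinalMaximal ℰ' := by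
  obtain ⟨g, hg, rfl⟩ := hc
  exact ⟨isBES_brename h.1 hg, finalMaximal_brename h.1 hg h.2⟩

end Rename

section ChainUnion

variable {c : ℕ → BES Ev A} {𝒮 : BES Ev A}

lemma IsChainUnion.isComponent (hU : IsChainUnion c 𝒮) (i : ℕ) : IsComponent (c i) 𝒮 :=
  ⟨fun z e h => (hU.2.2.1 z e).2 ⟨i, h⟩, fun e e' h => (hU.2.1 e e').2 ⟨i, h⟩⟩

lemma monotone_E_of_subBES (hsub : ∀ i, SubBES (c i) (c (i + 1))) :
    Monotone fun i => (c i).E :=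
  monotone_nat_of_le_succ fun i => (hsub i).1

lemma monotone_final_of_subBES (hsub : ∀ i, SubBES (c i) (c (i + 1))) :
    Monotone fun i => (c i).final :=
  monotone_nat_of_le_succ fun i e he => (((hsub i).2.2.2.2.2 e).1 he).1

lemma isBES_of_isChainUnion (hU : IsChainUnion c 𝒮) (hsub : ∀ i, SubBES (c i) (c (i + 1)))
    (hc : ∀ i, IsBES (c i)) : IsBES 𝒮 := by
  obtain ⟨hE, hcf, hbun, -, hlab, hfin⟩ := hU
  refine ⟨?_, ?_, ?_, ?_, ?_, ?_, ?_⟩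
  · intro e h
    obtain ⟨i, hi⟩ := (hcf e e).1 h
    exact (hc i).1 e hi
  · intro e e' h
    obtain ⟨i, hi⟩ := (hcf e e').1 h
    exact (hcf e' e).2 ⟨i, (hc i).2.1 _ _ hi⟩
  · intro e e' h
    obtain ⟨i, hi⟩ := (hcf e e').1 h
    obtain ⟨he, he'⟩ := (hc i).2.2.1 _ _ hi
    rw [hE]
    exact ⟨Set.mem_iUnion.2 ⟨i, he⟩, Set.mem_iUnion.2 ⟨i, he'⟩⟩
  · intro z e h
    obtain ⟨i, hi⟩ := (hbun z e).1 h
    obtain ⟨h1, h2, h3⟩ := (hc i).2.2.2.1 z e hi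
    rw [hE]
    exact ⟨Set.mem_iUnion.2 ⟨i, h1⟩, h2.trans (Set.subset_iUnion (fun j => (c j).E) i),
      fun a ha b hb hab => (hcf a b).2 ⟨i, h3 a ha b hb hab⟩⟩
  · intro e h
    by_contra he
    exact h (hlab e (hE ▸ he))
  · rw [hE, hfin]
    exact Set.iUnion_mono fun i => (hc i).final_subset
  · intro a ha b hb hab
    rw [hfin, Set.mem_iUnion] at ha hb
    obtain ⟨i, hi⟩ := ha
    obtain ⟨j, hj⟩ := hb
    have hmono := monotone_final_of_subBES hsub
    exact (hcf a b).2 ⟨max i j, (hc _).2.2.2.2.2.2 a (hmono (le_max_left i j) hi)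
      b (hmono (le_max_right i j) hj) hab⟩

lemma IsConfig.exists_subset_E_of_isChainUnion (hU : IsChainUnion c 𝒮)
    (hsub : ∀ i, SubBES (c i) (c (i + 1))) {x : Set Ev} (hx : IsConfig 𝒮 x) :
    ∃ n, x ⊆ (c n).E := by
  obtain ⟨α, hα, rfl⟩ := hx
  obtain ⟨n, hn⟩ :=
    (monotone_E_of_subBES hsub).directed_le.exists_mem_subset_of_finset_subset_biUnion
      (s := α.toFinset) fun e he => hU.1 ▸ hα.mem_E (List.mem_toFinset.1 he)
  exact ⟨n, fun e he => hn (List.mem_toFinset.2 he)⟩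

lemma finalMaximal_of_isChainUnion (hU : IsChainUnion c 𝒮)
    (hsub : ∀ i, SubBES (c i) (c (i + 1))) (hc : ∀ i, IsBES (c i))
    (hmax : ∀ i, FinalMaximal (c i)) : FinalMaximal 𝒮 := by
  rintro x y hx hy ⟨f, hfx, hff⟩ hxy
  obtain ⟨k, hk⟩ := Set.mem_iUnion.1 (hU.2.2.2.2.2 ▸ hff)
  obtain ⟨n, hn⟩ := hy.exists_subset_E_of_isChainUnion hU hsub
  have hfm := monotone_final_of_subBES hsub (le_max_left k n) hk
  have hym := hn.trans (monotone_E_of_subBES hsub (le_max_right k n))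
  exact Set.Subset.antisymm (fun e he => (hmax _).inter_E_subset (hc _) (hU.isComponent _)
    hx hy ⟨f, hfx, hfm⟩ hxy ⟨he, hym he⟩) hxy

end ChainUnion

lemma IsStarOf.isBES_and_finalMaximal {ℰ ℱ 𝒮 : BES Ev A} (hs : IsStarOf ℰ ℱ 𝒮)
    (hE : IsBES ℰ ∧ FinalMaximal ℰ) (hF : IsBES ℱ ∧ FinalMaximal ℱ) :
    IsBES 𝒮 ∧ FinalMaximal 𝒮 := by
  obtain ⟨c, h0, hstep, hU⟩ := hs
  have hsub : ∀ i, SubBES (c i) (c (i + 1)) := fun i => by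
    obtain ⟨-, -, -, -, -, -, -, h⟩ := hstep i
    exact h
  have hc : ∀ i, IsBES (c i) ∧ FinalMaximal (c i) := by
    intro i
    induction i with
    | zero => exact h0.isBES_and_finalMaximal hF
    | succ i ih =>
      obtain ⟨ℰ', ℱ', hE', hF', hd, -, heq, -⟩ := hstep i
      obtain ⟨hbE, hmE⟩ := hE'.isBES_and_finalMaximal hE
      obtain ⟨hbF, hmF⟩ := hF'.isBES_and_finalMaximal hF
      rw [heq]
      exact ⟨isBES_bchoice hbF (isBES_bseq hbE ih.1) hd,
        finalMaximal_bchoice hbF (isBES_bseq hbE ih.1) hd hmF (finalMaximal_bseq hbE ih.1 hmE ih.2)⟩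
  exact ⟨isBES_of_isChainUnion hU hsub fun i => (hc i).1,
    finalMaximal_of_isChainUnion hU hsub (fun i => (hc i).1) fun i => (hc i).2⟩

theorem Regular.isBES_and_finalMaximal {ℰ : BES Ev A} (h : Regular ℰ) :
    IsBES ℰ ∧ FinalMaximal ℰ := by
  induction h with
  | zero => exact ⟨isBES_besZero, finalMaximal_of_subsingleton Set.subsingleton_empty⟩
  | one e => exact ⟨isBES_besOne e, finalMaximal_of_subsingleton Set.subsingleton_singleton⟩
  | act e a => exact ⟨isBES_besAct e a, finalMaximal_of_subsingleton Set.subsingleton_singleton⟩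
  | choice _ _ hd ihE ihF =>
    exact ⟨isBES_bchoice ihE.1 ihF.1 hd, finalMaximal_bchoice ihE.1 ihF.1 hd ihE.2 ihF.2⟩
  | seq _ _ _ ihE ihF => exact ⟨isBES_bseq ihE.1 ihF.1, finalMaximal_bseq ihE.1 ihF.1 ihE.2 ihF.2⟩
  | par _ _ _ _ _ _ _ _ ihE ihF =>
    exact ⟨isBES_bpar ihE.1 ihF.1, finalMaximal_bpar ihE.1 ihF.1 ihE.2 ihF.2⟩
  | star _ _ hs ihE ihF => exact hs.isBES_and_finalMaximal ihE ihF

theorem seq_config_maximal_general {Ev A : Type} (ℰ ℱ : BES Ev A)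
    (hE : Regular ℰ) (hF : Regular ℱ)
    (x : Set Ev) (hx : IsConfig (bseq ℰ ℱ) x) (hne : (x ∩ ℱ.E).Nonempty) :
    IsConfig ℰ (x ∩ ℰ.E) ∧
    ∀ y : Set Ev, IsConfig ℰ y → x ∩ ℰ.E ⊆ y → y = x ∩ ℰ.E := by
  obtain ⟨hEwf, hEmax⟩ := hE.isBES_and_finalMaximal
  have hxE : IsConfig ℰ (x ∩ ℰ.E) := hx.inter_E hEwf isComponent_bseq_left
  obtain ⟨f, hfx, hff⟩ := hx.inter_final_nonempty_of_bseq hF.isBES_and_finalMaximal.1 hne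
  exact ⟨hxE, fun y hy hxy => hEmax _ y hxE hy ⟨f, ⟨hfx, hEwf.final_subset hff⟩, hff⟩ hxy⟩

/-- Corollary: for disjoint regular BES `ℰ`, `ℱ`, if a configuration `x` of
`ℰ·ℱ` meets `F`, then `x ∩ E` is a maximal configuration of `ℰ`. -/
theorem seq_config_maximal {Ev A : Type} (ℰ ℱ : BES Ev A)
    (hE : Regular ℰ) (hF : Regular ℱ) (hdisj : ℰ.E ∩ ℱ.E = ∅)
    (x : Set Ev) (hx : IsConfig (bseq ℰ ℱ) x) (hne : (x ∩ ℱ.E).Nonempty) :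
    IsConfig ℰ (x ∩ ℰ.E) ∧
    ∀ y : Set Ev, IsConfig ℰ y → x ∩ ℰ.E ⊆ y → y = x ∩ ℰ.E :=
  seq_config_maximal_general ℰ ℱ hE hF x hx hne

end PCKA
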